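/- Let φ : X → Y be an extension of compact semiflows of a topological monoid T such that t·φ⁻¹(y) = φ⁻¹(t·y) for all t ∈ T and y ∈ Y. If φ is highly proximal and the set of almost periodic points of the semiflow on X is dense in X, then every nonempty open subset U of X contains a full fiber, i.e., there exists y ∈ Y with φ⁻¹(y) ⊆ U. -/

import Mathlib

/-- The hyperspace `2^X` of all nonempty closed subsets of `X`. -/
def Hyper (X : Type*) [TopologicalSpace X] : Type _ := {K : Set X // IsClosed K ∧ K.Nonempty}

/-- The Vietoris topology on the hyperspace, generated by the subbasic sets
`{K | K ⊆ U}` and `{K | K ∩ U ≠ ∅}` for `U` open. -/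
instance Hyper.instTopologicalSpace (X : Type*) [TopologicalSpace X] :
    TopologicalSpace (Hyper X) :=
  TopologicalSpace.generateFrom
    ({S | ∃ U : Set X, IsOpen U ∧ S = {K : Hyper X | K.1 ⊆ U}} ∪
     {S | ∃ U : Set X, IsOpen U ∧ S = {K : Hyper X | (K.1 ∩ U).Nonempty}})

/-- The induced map `2^f : 2^X → 2^Y`, `K ↦ f[K]`.  (For closed subsets of a compact
space and continuous `f` into a Hausdorff space the image `f[K]` is closed, so taking
the closure below is redundant and this is indeed `K ↦ f[K]`.) -/
def hyperMap {X Y : Type*} [TopologicalSpace X] [TopologicalSpace Y] (f : X → Y) :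
    Hyper X → Hyper Y :=
  fun K => ⟨closure (f '' K.1), isClosed_closure, (K.2.2.image f).closure⟩

/-- A continuous surjection `g : A → B` is *semi-open* if for every nonempty open set
`U ⊆ A`, the interior of the image `g '' U` is nonempty. -/
def SemiOpen {A B : Type*} [TopologicalSpace A] [TopologicalSpace B] (g : A → B) : Prop :=
  ∀ U : Set A, IsOpen U → U.Nonempty → (interior (g '' U)).Nonempty

/-- A point `x` is *almost periodic* for the semiflow `T ↷ X` if `x ∈ cl(T·x)` and the
orbit closure `cl(T·x)` is a minimal subset, i.e. every point of `cl(T·x)` has orbit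
closure equal to `cl(T·x)`. -/
def IsAlmostPeriodicPt (T : Type*) {X : Type*} [Monoid T] [MulAction T X]
    [TopologicalSpace X] (x : X) : Prop :=
  x ∈ closure (MulAction.orbit T x) ∧
  ∀ z ∈ closure (MulAction.orbit T x),
    closure (MulAction.orbit T z) = closure (MulAction.orbit T x)

/-- The extension `φ : X → Y` of semiflows is *highly proximal* if for every `y ∈ Y`
there is a net `(tₙ)` in `T` with `tₙ • φ⁻¹(y)` converging in the hyperspace `2^X` to a
singleton; equivalently (as stated here), for every `y ∈ Y` some singleton `{x}` lies in
the closure in `2^X` of the set `{t • φ⁻¹(y) | t ∈ T}`, where `T` acts on `2^X` by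
`t • K = cl {t • x | x ∈ K}`. -/
def HighlyProximal (T : Type*) {X Y : Type*} [Monoid T] [MulAction T X]
    [TopologicalSpace X] [T1Space X] [TopologicalSpace Y] [T1Space Y]
    (φ : X → Y) (hc : Continuous φ) (hs : Function.Surjective φ) : Prop :=
  ∀ y : Y, ∃ x : X,
    (⟨{x}, isClosed_singleton, Set.singleton_nonempty x⟩ : Hyper X) ∈
      closure (Set.range fun t : T =>
        hyperMap (fun z : X => t • z)
          ⟨φ ⁻¹' {y}, isClosed_singleton.preimage hc,
            (Set.singleton_nonempty y).preimage hs⟩)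

/-!
Let `x₀ ∈ U` be almost periodic and `y₀ = φ x₀`. High proximality yields a point `x` such that
every neighbourhood of `x` contains a fiber `φ⁻¹(t • y₀)`. Each such fiber contains `t • x₀`,
so `x ∈ cl(T • x₀)`, and by minimality `x₀ ∈ cl(T • x)`. The points all of whose
neighbourhoods contain a fiber over the orbit of `y₀` form a closed `T`-invariant set, so `x₀`
belongs to it, and the neighbourhood `U` of `x₀` contains a full fiber.
-/

open Set Topology MulAction Pointwise

section CollapsePoints

variable {X ι : Type*} [TopologicalSpace X]

/-- The points onto which the family `A` collapses: for closed nonempty `A i`, these are the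
`x` for which `{x}` lies in the Vietoris closure of the family. -/
def collapsePoints (A : ι → Set X) : Set X :=
  {x | ∀ U ∈ 𝓝 x, ∃ i, A i ⊆ U}

theorem isClosed_collapsePoints (A : ι → Set X) : IsClosed (collapsePoints A) := by
  refine isClosed_iff_nhds.mpr fun x hx U hU => ?_
  obtain ⟨V, hVU, hV, hxV⟩ := mem_nhds_iff.mp hU
  obtain ⟨x', hx'V, hx'⟩ := hx V (hV.mem_nhds hxV)
  obtain ⟨i, hi⟩ := hx' V (hV.mem_nhds hx'V)
  exact ⟨i, hi.trans hVU⟩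

theorem collapsePoints_subset_closure {A : ι → Set X} {s : Set X}
    (hA : ∀ i, (A i ∩ s).Nonempty) : collapsePoints A ⊆ closure s := by
  refine fun x hx => mem_closure_iff_nhds.mpr fun U hU => ?_
  obtain ⟨i, hi⟩ := hx U hU
  exact (hA i).mono (inter_subset_inter_left s hi)

theorem smul_mem_collapsePoints {T : Type*} [Monoid T] [MulAction T X] [ContinuousConstSMul T X]
    {A : ι → Set X} (hA : ∀ (s : T) i, ∃ j, A j ⊆ s • A i) {x : X}
    (hx : x ∈ collapsePoints A) (s : T) : s • x ∈ collapsePoints A := by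
  intro U hU
  obtain ⟨i, hi⟩ := hx _ ((continuous_const_smul s).continuousAt.preimage_mem_nhds hU)
  obtain ⟨j, hj⟩ := hA s i
  exact ⟨j, hj.trans (smul_set_subset_iff.mpr hi)⟩

theorem closure_orbit_subset_collapsePoints {T : Type*} [Monoid T] [MulAction T X]
    [ContinuousConstSMul T X] {A : ι → Set X} (hA : ∀ (s : T) i, ∃ j, A j ⊆ s • A i) {x : X}
    (hx : x ∈ collapsePoints A) : closure (orbit T x) ⊆ collapsePoints A :=
  (isClosed_collapsePoints A).closure_subset_iff.mpr <| by
    rintro _ ⟨s, rfl⟩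
    exact smul_mem_collapsePoints hA hx s

end CollapsePoints

theorem Hyper.isOpen_setOf_subset {X : Type*} [TopologicalSpace X] {U : Set X}
    (hU : IsOpen U) : IsOpen {K : Hyper X | K.1 ⊆ U} :=
  TopologicalSpace.isOpen_generateFrom_of_mem (Or.inl ⟨U, hU, rfl⟩)

theorem Hyper.mem_collapsePoints_of_singleton_mem_closure {X ι : Type*} [TopologicalSpace X]
    [T1Space X] {K : ι → Hyper X} {x : X}
    (hx : (⟨{x}, isClosed_singleton, singleton_nonempty x⟩ : Hyper X) ∈ closure (range K)) :
    x ∈ collapsePoints fun i => (K i).1 := by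
  intro U hU
  obtain ⟨V, hVU, hV, hxV⟩ := mem_nhds_iff.mp hU
  obtain ⟨_, hKV, i, rfl⟩ := (mem_closure_iff (s := range K)).mp hx _
    (Hyper.isOpen_setOf_subset hV) (singleton_subset_iff.mpr hxV)
  exact ⟨i, hKV.trans hVU⟩

theorem exists_fiber_subset_smul_fiber {T X Y : Type*} [Monoid T] [MulAction T X]
    [MulAction T Y] {φ : X → Y}
    (hfiber : ∀ (t : T) (y : Y), (fun x : X => t • x) '' (φ ⁻¹' {y}) = φ ⁻¹' {t • y})
    (y : Y) (s t : T) : ∃ t' : T, φ ⁻¹' {t' • y} ⊆ s • φ ⁻¹' {t • y} :=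
  ⟨s * t, by rw [← image_smul, hfiber, mul_smul]⟩

theorem HighlyProximal.exists_mem_collapsePoints_fibers {T X Y : Type*} [Monoid T]
    [TopologicalSpace X] [T1Space X] [MulAction T X] [TopologicalSpace Y] [T1Space Y]
    [MulAction T Y] {φ : X → Y} (hc : Continuous φ) (hs : Function.Surjective φ)
    (hfiber : ∀ (t : T) (y : Y), (fun x : X => t • x) '' (φ ⁻¹' {y}) = φ ⁻¹' {t • y})
    (hhp : HighlyProximal T φ hc hs) (y : Y) :
    ∃ x, x ∈ collapsePoints fun t : T => φ ⁻¹' {t • y} := by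
  obtain ⟨x, hx⟩ := hhp y
  refine ⟨x, ?_⟩
  convert Hyper.mem_collapsePoints_of_singleton_mem_closure hx using 3 with t
  simp only [hyperMap, hfiber, (isClosed_singleton.preimage hc).closure_eq]

theorem exists_fiber_subset_of_highlyProximal_general
    {T X Y : Type*} [Monoid T] [TopologicalSpace T]
    [TopologicalSpace X] [T2Space X]
    [MulAction T X] [ContinuousSMul T X]
    [TopologicalSpace Y] [T2Space Y]
    [MulAction T Y]
    {φ : X → Y} (hc : Continuous φ) (hs : Function.Surjective φ)
    (hfiber : ∀ (t : T) (y : Y), (fun x : X => t • x) '' (φ ⁻¹' {y}) = φ ⁻¹' {t • y})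
    (hhp : HighlyProximal T φ hc hs)
    (hap : Dense {x : X | IsAlmostPeriodicPt T x}) :
    ∀ U : Set X, IsOpen U → U.Nonempty → ∃ y : Y, φ ⁻¹' {y} ⊆ U := by
  intro U hU hUne
  obtain ⟨x₀, hx₀, hx₀U⟩ := hap.exists_mem_open hU hUne
  obtain ⟨x, hx⟩ := hhp.exists_mem_collapsePoints_fibers hc hs hfiber (φ x₀)
  have hx_orbit : x ∈ closure (orbit T x₀) := by
    refine collapsePoints_subset_closure (fun t => ⟨t • x₀, ?_, mem_orbit x₀ t⟩) hx
    exact hfiber t (φ x₀) ▸ mem_image_of_mem _ rfl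
  have hx₀_orbit : x₀ ∈ closure (orbit T x) := hx₀.2 x hx_orbit ▸ hx₀.1
  obtain ⟨t, ht⟩ := closure_orbit_subset_collapsePoints (exists_fiber_subset_smul_fiber hfiber _)
    hx hx₀_orbit U (hU.mem_nhds hx₀U)
  exact ⟨t • φ x₀, ht⟩

/-- Claim in the proof of Theorem 6C. Let `φ : X → Y` be an extension of compact
semiflows of a topological monoid `T` with `t • φ⁻¹(y) = φ⁻¹(t • y)` for all `t, y`.
If `φ` is highly proximal and the almost periodic points of `X` are dense, then every
nonempty open subset of `X` contains a full fiber `φ⁻¹(y)`. -/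
theorem exists_fiber_subset_of_highlyProximal
    {T X Y : Type*} [Monoid T] [TopologicalSpace T] [ContinuousMul T]
    [TopologicalSpace X] [CompactSpace X] [T2Space X]
    [MulAction T X] [ContinuousSMul T X]
    [TopologicalSpace Y] [CompactSpace Y] [T2Space Y]
    [MulAction T Y] [ContinuousSMul T Y]
    {φ : X → Y} (hc : Continuous φ) (hs : Function.Surjective φ)
    (hequiv : ∀ (t : T) (x : X), φ (t • x) = t • φ x)
    (hfiber : ∀ (t : T) (y : Y), (fun x : X => t • x) '' (φ ⁻¹' {y}) = φ ⁻¹' {t • y})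
    (hhp : HighlyProximal T φ hc hs)
    (hap : Dense {x : X | IsAlmostPeriodicPt T x}) :
    ∀ U : Set X, IsOpen U → U.Nonempty → ∃ y : Y, φ ⁻¹' {y} ⊆ U :=
  exists_fiber_subset_of_highlyProximal_general hc hs hfiber hhp hap
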